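/- If σ is a singular n-simplex with σ ∘ s̄ = σ for an odd permutation s ∈ S_{n+1}, then the boundary class satisfies [∂σ] = −[∂σ] in C_{A,n-1}(X); moreover in the expression [∂σ] = Σᵢ (-1)^i [σ|_{[v₀,…,v̂ᵢ,…,vₙ]}], the i-th term cancels the s(i)-th term whenever s(i) ≠ i, so only terms with s(i) = i survive and each surviving term has order dividing 2. -/

import Mathlib

open Finset

/-- The standard `n`-simplex as a topological space. -/
abbrev Simp (n : ℕ) : Type := ↥(stdSimplex ℝ (Fin (n+1)))

/-- Singular `n`-simplices of `X`. -/
abbrev Sing (n : ℕ) (X : Type*) [TopologicalSpace X] : Type _ := C(Simp n, X)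

/-- The coordinate-permutation map `s̄` of the standard simplex induced by a
permutation `s`, sending barycentric coordinates `t` to `t ∘ s⁻¹`. -/
def permC {n : ℕ} (s : Equiv.Perm (Fin (n+1))) : C(Simp n, Simp n) where
  toFun t := ⟨fun j => t.1 (s⁻¹ j),
    ⟨fun j => t.2.1 _, by simpa using (Equiv.sum_comp (s⁻¹) t.1).trans t.2.2⟩⟩
  continuous_toFun := by
    apply Continuous.subtype_mk
    exact continuous_pi fun j => (continuous_apply (s⁻¹ j)).comp continuous_subtype_val

/-- The affine map of standard simplices induced by a map of vertices `g`. -/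
def vmap {m n : ℕ} (g : Fin (m+1) → Fin (n+1)) : C(Simp m, Simp n) where
  toFun t := ⟨fun j => ∑ k, if g k = j then t.1 k else 0,
    ⟨fun j => Finset.sum_nonneg fun k _ => by
        split_ifs
        · exact t.2.1 k
        · exact le_rfl
      , by
      rw [Finset.sum_comm]
      simpa using t.2.2⟩⟩
  continuous_toFun := by
    apply Continuous.subtype_mk
    exact continuous_pi fun j => continuous_finset_sum _ fun k _ => by
      split_ifs
      · exact (continuous_apply k).comp continuous_subtype_val
      · exact continuous_const

/-- The `i`-th face inclusion of the standard simplex. -/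
def faceMap {n : ℕ} (i : Fin (n+2)) : C(Simp n, Simp (n+1)) := vmap i.succAbove

/-- Singular `n`-cochains with coefficients in `G` (as `Hom` from the free
abelian group on singular simplices, i.e. functions on singular simplices). -/
abbrev SCochain (n : ℕ) (X : Type*) [TopologicalSpace X] (G : Type*) [AddCommGroup G] : Type _ :=
  Sing n X → G

variable {X Y : Type*} [TopologicalSpace X] [TopologicalSpace Y]
variable {G : Type*} [AddCommGroup G]

/-- The singular coboundary operator. -/
def cob {n : ℕ} (α : SCochain n X G) : SCochain (n+1) X G :=
  fun σ => ∑ i : Fin (n+2), (-1 : ℤ)^(i : ℕ) • α (σ.comp (faceMap i))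

/-- A cochain is alternative (oriented) if permuting the vertices of a singular
simplex multiplies its value by the sign of the permutation. -/
def IsAlt {n : ℕ} (α : SCochain n X G) : Prop :=
  ∀ (σ : Sing n X) (s : Equiv.Perm (Fin (n+1))),
    α (σ.comp (permC s)) = (Equiv.Perm.sign s : ℤ) • α σ

/-- The alternative-maker (antisymmetrization) operator on rational cochains. -/
def Aop {n : ℕ} (α : SCochain n X ℚ) : SCochain n X ℚ :=
  fun σ => ((n+1).factorial : ℚ)⁻¹ *
    ∑ s : Equiv.Perm (Fin (n+1)), ((Equiv.Perm.sign s : ℤ) : ℚ) * α (σ.comp (permC s))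

/-- The ordinary singular cup product. -/
def cup {p q : ℕ} (α : SCochain p X ℚ) (β : SCochain q X ℚ) : SCochain (p+q) X ℚ :=
  fun σ =>
    α (σ.comp (vmap (fun k : Fin (p+1) => Fin.castLE (by omega) k))) *
    β (σ.comp (vmap (fun k : Fin (q+1) => ⟨p + k, by omega⟩)))

/-- The alternative (modified) cup product. -/
def cupA {p q : ℕ} (α : SCochain p X ℚ) (β : SCochain q X ℚ) : SCochain (p+q) X ℚ :=
  Aop (cup α β)

/-- Reindexing of cochains along an equality of degrees. -/
def ccast {m n : ℕ} (h : m = n) (α : SCochain m X G) : SCochain n X G :=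
  fun σ => α (σ.comp (vmap (fun k : Fin (m+1) => Fin.cast (by omega) k)))

/-- The permutation of `{0,…,n-1}` induced by `s ∈ S_{n+1}` by deleting `i`
from the domain, `s i` from the range, and renumbering. -/
def inducedPerm {n : ℕ} (s : Equiv.Perm (Fin (n+2))) (i : Fin (n+2)) :
    Equiv.Perm (Fin (n+1)) :=
  Equiv.removeNone ((finSuccEquiv' i).symm.trans (s.trans (finSuccEquiv' (s i))))

/-- Singular `n`-chains: the free abelian group on singular `n`-simplices. -/
abbrev SChain (n : ℕ) (X : Type*) [TopologicalSpace X] : Type _ := Sing n X →₀ ℤ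

/-- The singular boundary operator. -/
noncomputable def bnd {n : ℕ} : SChain (n+1) X →+ SChain n X :=
  Finsupp.liftAddHom fun σ => zmultiplesHom _
    (∑ i : Fin (n+2), (-1 : ℤ)^(i : ℕ) • Finsupp.single (σ.comp (faceMap i)) (1 : ℤ))

/-- The subgroup `U_n(X)` generated by the elements `σ∘s̄ − sign(s)·σ`. -/
noncomputable def Urel (n : ℕ) (X : Type*) [TopologicalSpace X] : AddSubgroup (SChain n X) :=
  AddSubgroup.closure {x | ∃ (σ : Sing n X) (s : Equiv.Perm (Fin (n+1))),
    x = Finsupp.single (σ.comp (permC s)) 1 - (Equiv.Perm.sign s : ℤ) • Finsupp.single σ 1}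

/-- The pullback of cochains along a continuous map. -/
def pb (f : C(X, Y)) {n : ℕ} (α : SCochain n Y G) : SCochain n X G :=
  fun σ => α (f.comp σ)


section Aux17

lemma succAbove_inducedPerm {n : ℕ} (s : Equiv.Perm (Fin (n+2))) (i : Fin (n+2))
    (k : Fin (n+1)) :
    (s i).succAbove (inducedPerm s i k) = s (i.succAbove k) := by
  set e := (finSuccEquiv' i).symm.trans (s.trans (finSuccEquiv' (s i))) with he
  have h1 : e (some k) = finSuccEquiv' (s i) (s (i.succAbove k)) := by
    simp [he, finSuccEquiv'_symm_some]
  obtain ⟨j, hj⟩ := Fin.exists_succAbove_eq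
    (show s (i.succAbove k) ≠ s i from fun hh => (Fin.succAbove_ne i k) (s.injective hh))
  have h2 : e (some k) = some j := by rw [h1, ← hj, finSuccEquiv'_succAbove]
  have h3 : some (Equiv.removeNone e k) = some j :=
    (Equiv.removeNone_some (e := e) ⟨j, h2⟩).trans h2
  have h4 : inducedPerm s i k = j := Option.some_injective _ h3
  rw [h4, hj]

lemma finSuccEquiv'_eq_cycleRange {m : ℕ} (a : Fin (m+1)) :
    finSuccEquiv' a = (Fin.cycleRange a : Equiv.Perm (Fin (m+1))).trans (finSuccEquiv' 0) := by
  ext x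
  rcases eq_or_ne x a with rfl | hx
  · simp [finSuccEquiv'_at, Fin.cycleRange_self]
  · obtain ⟨j, rfl⟩ := Fin.exists_succAbove_eq hx
    simp only [Equiv.trans_apply, finSuccEquiv'_succAbove, Fin.cycleRange_succAbove]
    rw [← Fin.zero_succAbove j, finSuccEquiv'_succAbove]

lemma neg_one_pow_mul_self (k : ℕ) : (-1 : ℤ)^k * (-1 : ℤ)^k = 1 := by
  rw [← pow_add, ← two_mul, pow_mul]; norm_num

lemma sign_inducedPerm_int {n : ℕ} (s : Equiv.Perm (Fin (n+2))) (i : Fin (n+2)) :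
    ((Equiv.Perm.sign (inducedPerm s i) : ℤˣ) : ℤ)
      = ((Equiv.Perm.sign s : ℤˣ) : ℤ) * (-1)^((i : ℕ) + ((s i : Fin (n+2)) : ℕ)) := by
  set t' := inducedPerm s i with ht'
  have hs : s = ((finSuccEquiv' i).trans ((t'.optionCongr).trans
      (finSuccEquiv' (s i)).symm)) := by
    ext x
    rcases eq_or_ne x i with rfl | hx
    · simp [finSuccEquiv'_at, finSuccEquiv'_symm_none]
    · obtain ⟨j, rfl⟩ := Fin.exists_succAbove_eq hx
      simp only [Equiv.trans_apply, finSuccEquiv'_succAbove, Equiv.optionCongr_apply,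
        Option.map_some, finSuccEquiv'_symm_some]
      exact congrArg _ (succAbove_inducedPerm s i j).symm
  have hdec : ((finSuccEquiv' i).trans ((t'.optionCongr).trans (finSuccEquiv' (s i)).symm))
      = ((Fin.cycleRange (s i))⁻¹
          * ((finSuccEquiv' (0 : Fin (n+2))).symm.permCongr t'.optionCongr)
          * (Fin.cycleRange i) : Equiv.Perm (Fin (n+2))) := by
    rw [finSuccEquiv'_eq_cycleRange i, finSuccEquiv'_eq_cycleRange (s i)]
    ext x
    simp [Equiv.permCongr, Equiv.equivCongr, Equiv.Perm.mul_apply, Equiv.Perm.inv_def]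
  have hsign := congrArg Equiv.Perm.sign (hs.trans hdec)
  rw [map_mul, map_mul, map_inv, Fin.sign_cycleRange, Fin.sign_cycleRange,
    Equiv.Perm.sign_permCongr, Equiv.optionCongr_sign, Int.units_inv_eq_self] at hsign
  have hz := congrArg (Units.val) hsign
  push_cast at hz
  rw [hz, pow_add]
  have hi := neg_one_pow_mul_self (i : ℕ)
  have hsi := neg_one_pow_mul_self ((s i : Fin (n+2)) : ℕ)
  set u := ((Equiv.Perm.sign t' : ℤˣ) : ℤ)
  linear_combination (-u * (-1 : ℤ)^((s i : Fin (n+2)) : ℕ)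
      * (-1 : ℤ)^((s i : Fin (n+2)) : ℕ)) * hi + (-u) * hsi

lemma permC_faceMap {n : ℕ} (s : Equiv.Perm (Fin (n+2))) (i : Fin (n+2)) :
    (permC s).comp (faceMap i) = (faceMap (s i)).comp (permC (inducedPerm s i)) := by
  ext t : 1
  apply Subtype.ext
  funext j
  show (∑ k, if i.succAbove k = s⁻¹ j then t.1 k else 0)
      = ∑ k, if (s i).succAbove k = j then t.1 ((inducedPerm s i)⁻¹ k) else 0
  rw [← Equiv.sum_comp (inducedPerm s i)
    (fun k => if (s i).succAbove k = j then t.1 ((inducedPerm s i)⁻¹ k) else 0)]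
  refine Finset.sum_congr rfl fun k _ => ?_
  rw [show (inducedPerm s i)⁻¹ ((inducedPerm s i) k) = k from (inducedPerm s i).symm_apply_apply k, succAbove_inducedPerm]
  refine if_congr ?_ rfl rfl
  rw [Equiv.Perm.inv_def]
  exact (s.apply_eq_iff_eq_symm_apply).symm

lemma mk_single_permC {n : ℕ} {X : Type*} [TopologicalSpace X] (τ : Sing n X)
    (t : Equiv.Perm (Fin (n+1))) :
    QuotientAddGroup.mk' (Urel n X) (Finsupp.single (τ.comp (permC t)) 1)
      = ((Equiv.Perm.sign t : ℤˣ) : ℤ) •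
        QuotientAddGroup.mk' (Urel n X) (Finsupp.single τ 1) := by
  have hmem : Finsupp.single (τ.comp (permC t)) 1
      - (Equiv.Perm.sign t : ℤ) • Finsupp.single τ (1 : ℤ) ∈ Urel n X :=
    AddSubgroup.subset_closure ⟨τ, t, rfl⟩
  have h0 : QuotientAddGroup.mk' (Urel n X)
      (Finsupp.single (τ.comp (permC t)) 1
        - (Equiv.Perm.sign t : ℤ) • Finsupp.single τ (1 : ℤ)) = 0 :=
    (QuotientAddGroup.eq_zero_iff _).mpr hmem
  rw [map_sub, map_zsmul, sub_eq_zero] at h0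
  exact h0

end Aux17

/-- for `σ` invariant under an odd permutation `s`, the boundary
class is 2-torsion; terms `i` and `s i` cancel when `s i ≠ i`, and surviving
terms (with `s i = i`) have order dividing 2. -/
theorem statement17 {X : Type*} [TopologicalSpace X] {n : ℕ} (σ : Sing (n+1) X)
    (s : Equiv.Perm (Fin (n+2))) (h1 : σ.comp (permC s) = σ)
    (h2 : Equiv.Perm.sign s = -1) :
    (QuotientAddGroup.mk' (Urel n X) (bnd (Finsupp.single σ 1))
        = - QuotientAddGroup.mk' (Urel n X) (bnd (Finsupp.single σ 1))) ∧
    (∀ i : Fin (n+2), s i ≠ i →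
      (-1 : ℤ)^(i : ℕ) • QuotientAddGroup.mk' (Urel n X)
          (Finsupp.single (σ.comp (faceMap i)) 1)
        + (-1 : ℤ)^((s i : Fin (n+2)) : ℕ) • QuotientAddGroup.mk' (Urel n X)
          (Finsupp.single (σ.comp (faceMap (s i))) 1) = 0) ∧
    (∀ i : Fin (n+2), s i = i →
      (2 : ℤ) • QuotientAddGroup.mk' (Urel n X)
          (Finsupp.single (σ.comp (faceMap i)) 1) = 0) := by
  classical
  have key : ∀ i : Fin (n+2),
      (-1 : ℤ)^(i : ℕ) • QuotientAddGroup.mk' (Urel n X) (Finsupp.single (σ.comp (faceMap i)) 1)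
        = -((-1 : ℤ)^((s i : Fin (n+2)) : ℕ) •
            QuotientAddGroup.mk' (Urel n X) (Finsupp.single (σ.comp (faceMap (s i))) 1)) := by
    intro i
    have hc : σ.comp (faceMap i)
        = (σ.comp (faceMap (s i))).comp (permC (inducedPerm s i)) := by
      conv_lhs => rw [← h1]
      rw [ContinuousMap.comp_assoc, ContinuousMap.comp_assoc, permC_faceMap]
    rw [hc, mk_single_permC, sign_inducedPerm_int, h2, smul_smul, ← neg_smul]
    congr 1
    simp only [Units.val_neg, Units.val_one]
    have hi := neg_one_pow_mul_self (i : ℕ)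
    rw [pow_add]
    linear_combination (-(-1 : ℤ)^((s i : Fin (n+2)) : ℕ)) * hi
  refine ⟨?_, fun i _ => ?_, fun i hi => ?_⟩
  · have hb : bnd (Finsupp.single σ (1 : ℤ))
        = ∑ i : Fin (n+2), (-1 : ℤ)^(i : ℕ) •
            Finsupp.single (σ.comp (faceMap i)) (1 : ℤ) := by
      simp [bnd]
    rw [hb, map_sum]
    simp only [map_zsmul]
    calc ∑ i : Fin (n+2), (-1 : ℤ)^(i : ℕ) • QuotientAddGroup.mk' (Urel n X) (Finsupp.single (σ.comp (faceMap i)) 1)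
        = ∑ i : Fin (n+2), -((-1 : ℤ)^((s i : Fin (n+2)) : ℕ) •
            QuotientAddGroup.mk' (Urel n X) (Finsupp.single (σ.comp (faceMap (s i))) 1)) :=
          Finset.sum_congr rfl fun i _ => key i
      _ = -∑ i : Fin (n+2), (-1 : ℤ)^((s i : Fin (n+2)) : ℕ) •
            QuotientAddGroup.mk' (Urel n X) (Finsupp.single (σ.comp (faceMap (s i))) 1) := by rw [Finset.sum_neg_distrib]
      _ = -∑ i : Fin (n+2), (-1 : ℤ)^(i : ℕ) •
            QuotientAddGroup.mk' (Urel n X) (Finsupp.single (σ.comp (faceMap i)) 1) := by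
          rw [Equiv.sum_comp s
            (fun i => (-1 : ℤ)^(i : ℕ) • QuotientAddGroup.mk' (Urel n X) (Finsupp.single (σ.comp (faceMap i)) 1))]
  · rw [key i, neg_add_cancel]
  · have hk := key i
    rw [hi] at hk
    have h2t : (2 : ℤ) • ((-1 : ℤ)^(i : ℕ) •
        QuotientAddGroup.mk' (Urel n X) (Finsupp.single (σ.comp (faceMap i)) 1)) = 0 := by
      rw [two_zsmul]
      nth_rewrite 1 [hk]
      rw [neg_add_cancel]
    have h3 := congrArg (fun z => ((-1 : ℤ)^(i : ℕ)) • z) h2t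
    simp only [smul_smul, smul_zero] at h3
    have hc : (-1 : ℤ)^(i : ℕ) * (2 * (-1 : ℤ)^(i : ℕ)) = 2 := by
      linear_combination 2 * neg_one_pow_mul_self (i : ℕ)
    rwa [hc] at h3
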